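/- arXiv:2310.00398 — 2 statements merged into one kernel-verified Lean document; each statement's English description precedes it below -/
import Mathlib

section
/- Let a, b > 0 and c ∈ (0, π/2], and define g(ψ) = a·sin²ψ + b·sin²(c − ψ). Then with γ = a + b·cos(2c), δ = b·sin(2c), and Ω = arctan(δ/γ) (assuming γ > 0), the point ψ* = Ω/2 lies in [0, c] and is a global minimizer of g on [0, c]. -/
/-!
Writing γ = a + b cos 2c and δ = b sin 2c, the double-angle formulas give
g(ψ) = (a + b)/2 − (γ cos 2ψ + δ sin 2ψ)/2. By Cauchy–Schwarz the bracket is at most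
√(γ² + δ²), with equality at 2ψ = arctan (δ/γ) = Ω because γ > 0. Finally Ω ∈ [0, 2c]:
the vector (γ, δ) = a (1, 0) + b (cos 2c, sin 2c) is a nonnegative combination of unit
vectors at angles 0 and 2c.
-/

open Real

namespace Real

theorem mul_sin_sq_add_mul_sin_sub_sq (a b c x : ℝ) :
    a * sin x ^ 2 + b * sin (c - x) ^ 2 =
      (a + b) / 2 - ((a + b * cos (2 * c)) * cos (2 * x) + b * sin (2 * c) * sin (2 * x)) / 2 := by
  rw [sin_sq_eq_half_sub, sin_sq_eq_half_sub, mul_sub 2 c x, cos_sub]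
  ring

theorem mul_cos_add_mul_sin_le_sqrt (p q t : ℝ) : p * cos t + q * sin t ≤ √(p ^ 2 + q ^ 2) :=
  le_sqrt_of_sq_le <| by
    nlinarith [sin_sq_add_cos_sq t, sq_nonneg (p * sin t - q * cos t)]

theorem mul_cos_arctan_add_mul_sin_arctan {p : ℝ} (hp : 0 < p) (q : ℝ) :
    p * cos (arctan (q / p)) + q * sin (arctan (q / p)) = √(p ^ 2 + q ^ 2) := by
  have hsqrt : √(1 + (q / p) ^ 2) = √(p ^ 2 + q ^ 2) / p := by
    rw [eq_div_iff hp.ne', ← sqrt_sq hp.le, ← sqrt_mul (by positivity)]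
    congr 1
    field_simp
    rw [sq_sqrt (sq_nonneg p)]
  rw [cos_arctan, sin_arctan, hsqrt]
  field_simp
  rw [sq_sqrt (by positivity)]

theorem arctan_div_le_of_mul_cos_le_mul_sin {x y θ : ℝ} (hx : 0 < x) (hθ : -(π / 2) < θ)
    (h : y * cos θ ≤ x * sin θ) : arctan (y / x) ≤ θ := by
  rcases le_or_gt (π / 2) θ with hθ' | hθ'
  · exact (arctan_lt_pi_div_two _).le.trans hθ'
  · have hcos : 0 < cos θ := cos_pos_of_mem_Ioo ⟨hθ, hθ'⟩
    calc arctan (y / x) ≤ arctan (tan θ) := by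
          rw [arctan_le_arctan_iff, tan_eq_sin_div_cos, div_le_div_iff₀ hx hcos]
          linarith
      _ = θ := arctan_tan hθ hθ'

end Real

theorem stmt3 (a b c : ℝ) (ha : 0 < a) (hb : 0 < b) (hc : c ∈ Set.Ioc 0 (π / 2))
    (γ δ Ω : ℝ) (hγ : γ = a + b * Real.cos (2 * c)) (hδ : δ = b * Real.sin (2 * c))
    (hγpos : 0 < γ) (hΩ : Ω = Real.arctan (δ / γ)) :
    Ω / 2 ∈ Set.Icc 0 c ∧
      ∀ ψ ∈ Set.Icc 0 c,
        a * Real.sin (Ω / 2) ^ 2 + b * Real.sin (c - Ω / 2) ^ 2 ≤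
          a * Real.sin ψ ^ 2 + b * Real.sin (c - ψ) ^ 2 := by
  obtain ⟨hc0, hcπ⟩ := hc
  have hsin : 0 ≤ sin (2 * c) := sin_nonneg_of_nonneg_of_le_pi (by linarith) (by linarith)
  have hΩ0 : 0 ≤ Ω := hΩ ▸ arctan_nonneg.2 (div_nonneg (hδ ▸ by positivity) hγpos.le)
  have hΩc : Ω ≤ 2 * c := hΩ ▸ arctan_div_le_of_mul_cos_le_mul_sin hγpos (by linarith)
    (by rw [hγ, hδ]; nlinarith [mul_nonneg ha.le hsin])
  have hg : ∀ x, a * sin x ^ 2 + b * sin (c - x) ^ 2 =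
      (a + b) / 2 - (γ * cos (2 * x) + δ * sin (2 * x)) / 2 := fun x => by
    rw [mul_sin_sq_add_mul_sin_sub_sq, hγ, hδ]
  refine ⟨⟨by linarith, by linarith⟩, fun ψ _ => ?_⟩
  rw [hg, hg, mul_div_cancel₀ Ω two_ne_zero, hΩ, mul_cos_arctan_add_mul_sin_arctan hγpos]
  linarith [mul_cos_add_mul_sin_le_sqrt γ δ (2 * ψ)]
end

section
/- Let α, β ∈ ℝ² be nonzero with angle φ strictly greater than θ ∈ (0, π) between them. Then the Euclidean projection of (α, β) (in ℝ⁴ with product norm) onto the set C₃ = {(a, b) : ∠(a, b) = θ} coincides with its projection onto C_narr = {(a, b) : ∠(a, b) ≤ θ}: every closest point of C_narr to (α, β) lies on the boundary ∠(a,b) = θ. -/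
open InnerProductGeometry Real
open AffineMap Filter Set Module
open scoped RealInnerProductSpace Topology

/-!
Moving a pair `p = (x, y)` along the segment towards `(α, β)` scales its squared distance to
`(α, β)` by `(1 - t)²`. At `p` with `∠(x, y) < θ` a short step keeps `∠ < θ` and strictly decreases
the distance, so minimizers over `{∠ ≤ θ}` lie on `{∠ = θ}`. Conversely, since `∠(α, β) > θ`, the
whole segment from such a `p` crosses `{∠ = θ}` by the intermediate value theorem, at a point no
farther from `(α, β)` than `p`; this needs the segment to avoid `0` in each factor, which a small
generic perturbation of `p` ensures once the dimension is at least `2`.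
-/

section

variable {E : Type*} [NormedAddCommGroup E]

def pairSqDist (α β : E) (p : E × E) : ℝ := ‖p.1 - α‖ ^ 2 + ‖p.2 - β‖ ^ 2

theorem pairSqDist_nonneg (α β : E) (p : E × E) : 0 ≤ pairSqDist α β p := by
  unfold pairSqDist; positivity

theorem pairSqDist_pos {α β : E} {p : E × E} (hp : p ≠ (α, β)) : 0 < pairSqDist α β p := by
  have : p.1 - α ≠ 0 ∨ p.2 - β ≠ 0 := by
    by_contra! h
    exact hp (Prod.ext (sub_eq_zero.1 h.1) (sub_eq_zero.1 h.2))
  unfold pairSqDist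
  rcases this with h | h
  · have := norm_pos_iff.2 h; positivity
  · have := norm_pos_iff.2 h; positivity

theorem continuous_pairSqDist (α β : E) : Continuous (pairSqDist α β) := by
  unfold pairSqDist; fun_prop

variable [InnerProductSpace ℝ E]

def angleLESet (θ : ℝ) : Set (E × E) := {p | p.1 ≠ 0 ∧ p.2 ≠ 0 ∧ angle p.1 p.2 ≤ θ}

def angleEqSet (θ : ℝ) : Set (E × E) := {p | p.1 ≠ 0 ∧ p.2 ≠ 0 ∧ angle p.1 p.2 = θ}

theorem pairSqDist_lineMap (α β : E) (p : E × E) (t : ℝ) :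
    pairSqDist α β (lineMap p (α, β) t) = (1 - t) ^ 2 * pairSqDist α β p := by
  have key : ∀ a b : E, ‖lineMap a b t - b‖ = |1 - t| * ‖a - b‖ := fun a b => by
    rw [lineMap_apply_module, show (1 - t) • a + t • b - b = (1 - t) • (a - b) by module,
      norm_smul, Real.norm_eq_abs]
  simp only [pairSqDist, fst_lineMap, snd_lineMap, key, mul_pow, sq_abs]
  ring

theorem exists_pairSqDist_lt_of_angle_lt {α β : E} {θ : ℝ} (hφ : θ < angle α β)
    {p : E × E} (hp₁ : p.1 ≠ 0) (hp₂ : p.2 ≠ 0) (hlt : angle p.1 p.2 < θ) :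
    ∃ q ∈ angleLESet θ, pairSqDist α β q < pairSqDist α β p := by
  have hpos : 0 < pairSqDist α β p :=
    pairSqDist_pos fun h => by subst h; exact (hlt.trans hφ).false
  have hpath : Tendsto (lineMap p (α, β) : ℝ → E × E) (𝓝 0) (𝓝 p) :=
    lineMap_continuous.tendsto' 0 p (lineMap_apply_zero _ _)
  have hgood : ∀ᶠ t in 𝓝 (0 : ℝ),
      lineMap p (α, β) t ∈ {z : E × E | z.1 ≠ 0 ∧ z.2 ≠ 0 ∧ angle z.1 z.2 < θ} :=
    hpath.eventually ((continuousAt_fst.eventually_ne hp₁).and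
      ((continuousAt_snd.eventually_ne hp₂).and
        ((continuousAt_angle hp₁ hp₂).eventually_lt_const hlt)))
  obtain ⟨t, ⟨h₁, h₂, h₃⟩, ht⟩ :=
    ((eventually_nhdsWithin_of_eventually_nhds hgood).and (Ioo_mem_nhdsGT one_pos)).exists
  refine ⟨_, ⟨h₁, h₂, h₃.le⟩, ?_⟩
  rw [pairSqDist_lineMap]
  have : (1 - t) ^ 2 < 1 := by nlinarith [ht.1, ht.2]
  nlinarith

theorem angle_eq_of_forall_pairSqDist_le {α β : E} {θ : ℝ} (hφ : θ < angle α β)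
    {p : E × E} (hp : p ∈ angleLESet θ)
    (hmin : ∀ q ∈ angleLESet θ, pairSqDist α β p ≤ pairSqDist α β q) : angle p.1 p.2 = θ := by
  by_contra hne
  obtain ⟨q, hq, hqp⟩ :=
    exists_pairSqDist_lt_of_angle_lt hφ hp.1 hp.2.1 (hp.2.2.lt_of_ne hne)
  exact (hmin q hq).not_gt hqp

theorem exists_mem_angleEqSet_of_lineMap_ne_zero {α β : E} {θ : ℝ} {p : E × E}
    (h₁ : ∀ t : ℝ, lineMap p.1 α t ≠ 0) (h₂ : ∀ t : ℝ, lineMap p.2 β t ≠ 0)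
    (hle : angle p.1 p.2 ≤ θ) (hge : θ ≤ angle α β) :
    ∃ q ∈ angleEqSet θ, pairSqDist α β q ≤ pairSqDist α β p := by
  set g : ℝ → ℝ := fun t => angle (lineMap p.1 α t) (lineMap p.2 β t)
  have hpath : Continuous fun t : ℝ => (lineMap p.1 α t, lineMap p.2 β t) := by fun_prop
  have hg : Continuous g := continuous_iff_continuousAt.2 fun t =>
    (continuousAt_angle (h₁ t) (h₂ t)).comp
      (f := fun t : ℝ => (lineMap p.1 α t, lineMap p.2 β t)) hpath.continuousAt
  obtain ⟨t, ht, hgt⟩ := intermediate_value_Icc zero_le_one hg.continuousOn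
    (show θ ∈ Icc (g 0) (g 1) by
      simp only [g, lineMap_apply_zero, lineMap_apply_one]; exact ⟨hle, hge⟩)
  refine ⟨lineMap p (α, β) t, ⟨by simpa using h₁ t, by simpa using h₂ t, by simpa using hgt⟩, ?_⟩
  rw [pairSqDist_lineMap]
  have : (1 - t) ^ 2 ≤ 1 := by nlinarith [ht.1, ht.2]
  nlinarith [pairSqDist_nonneg α β p]

theorem lineMap_ne_zero_of_inner_ne_zero {v x a : E} (ha : a ≠ 0) (hva : ⟪v, a⟫ = 0)
    (hvx : ⟪v, x⟫ ≠ 0) (t : ℝ) : lineMap x a t ≠ 0 := by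
  intro h
  have hv : (1 - t) * ⟪v, x⟫ = 0 := by
    simpa [lineMap_apply_module, inner_add_right, real_inner_smul_right, hva] using
      congrArg (⟪v, ·⟫) h
  obtain rfl : t = 1 := by linarith [(mul_eq_zero.1 hv).resolve_right hvx]
  exact ha (by simpa using h)

theorem dense_inner_ne_zero {v : E} (hv : v ≠ 0) : Dense {x : E | ⟪v, x⟫ ≠ 0} := by
  have hker : {x : E | ⟪v, x⟫ ≠ 0} = (LinearMap.ker (innerₛₗ ℝ v) : Set E)ᶜ := by
    ext x; simp
  rw [hker, ← interior_eq_empty_iff_dense_compl, ← Set.not_nonempty_iff_eq_empty]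
  intro h
  have := congrArg (v ∈ ·) ((LinearMap.ker (innerₛₗ ℝ v)).eq_top_of_nonempty_interior' h)
  simp [hv] at this

theorem exists_ne_zero_inner_eq_zero [FiniteDimensional ℝ E] (hE : 2 ≤ finrank ℝ E) (a : E) :
    ∃ v ≠ 0, ⟪v, a⟫ = 0 := by
  have hK : (ℝ ∙ a)ᗮ ≠ ⊥ := by
    intro h
    have hsum := (ℝ ∙ a).finrank_add_finrank_orthogonal
    have hspan : finrank ℝ (ℝ ∙ a) ≤ 1 := by
      simpa using finrank_span_le_card (R := ℝ) ({a} : Set E)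
    rw [h, finrank_bot] at hsum
    omega
  obtain ⟨v, hv, hv0⟩ := Submodule.exists_mem_ne_zero_of_ne_bot hK
  exact ⟨v, hv0, Submodule.mem_orthogonal_singleton_iff_inner_left.1 hv⟩

theorem exists_mem_angleEqSet_pairSqDist_lt [FiniteDimensional ℝ E] (hE : 2 ≤ finrank ℝ E)
    {α β : E} (hα : α ≠ 0) (hβ : β ≠ 0) {θ : ℝ} (hφ : θ ≤ angle α β) {p : E × E}
    (hp : p ∈ angleLESet θ) {ε : ℝ} (hε : 0 < ε) :
    ∃ q ∈ angleEqSet θ, pairSqDist α β q < pairSqDist α β p + ε := by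
  obtain ⟨hp₁, hp₂, hle⟩ := hp
  rcases hle.eq_or_lt with heq | hlt
  · exact ⟨p, ⟨hp₁, hp₂, heq⟩, lt_add_of_pos_right _ hε⟩
  obtain ⟨v, hv, hvα⟩ := exists_ne_zero_inner_eq_zero hE α
  obtain ⟨w, hw, hwβ⟩ := exists_ne_zero_inner_eq_zero hE β
  have hnear : ∀ᶠ z in 𝓝 p, angle z.1 z.2 < θ ∧ pairSqDist α β z < pairSqDist α β p + ε :=
    ((continuousAt_angle hp₁ hp₂).eventually_lt_const hlt).and
      ((continuous_pairSqDist α β).continuousAt.eventually_lt_const (lt_add_of_pos_right _ hε))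
  have hgeneric : ∃ᶠ z in 𝓝 p, z ∈ {x : E | ⟪v, x⟫ ≠ 0} ×ˢ {y : E | ⟪w, y⟫ ≠ 0} :=
    mem_closure_iff_frequently.1 ((dense_inner_ne_zero hv).prod (dense_inner_ne_zero hw) p)
  obtain ⟨z, ⟨hzθ, hzp⟩, hz₁, hz₂⟩ := (hnear.and_frequently hgeneric).exists
  obtain ⟨q, hq, hqz⟩ := exists_mem_angleEqSet_of_lineMap_ne_zero
    (lineMap_ne_zero_of_inner_ne_zero hα hvα hz₁) (lineMap_ne_zero_of_inner_ne_zero hβ hwβ hz₂)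
    hzθ.le hφ
  exact ⟨q, hq, hqz.trans_lt hzp⟩

theorem forall_angleLESet_pairSqDist_le [FiniteDimensional ℝ E] (hE : 2 ≤ finrank ℝ E)
    {α β : E} (hα : α ≠ 0) (hβ : β ≠ 0) {θ : ℝ} (hφ : θ ≤ angle α β) {p : E × E}
    (hmin : ∀ q ∈ angleEqSet θ, pairSqDist α β p ≤ pairSqDist α β q) :
    ∀ q ∈ angleLESet θ, pairSqDist α β p ≤ pairSqDist α β q := fun q hq =>
  le_of_forall_pos_lt_add fun ε hε => by
    obtain ⟨z, hz, hzq⟩ := exists_mem_angleEqSet_pairSqDist_lt hE hα hβ hφ hq hε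
    exact (hmin z hz).trans_lt hzq

end

theorem stmt16_general (α β : EuclideanSpace ℝ (Fin 2)) (hα : α ≠ 0) (hβ : β ≠ 0)
    (θ : ℝ) (hφ : θ < InnerProductGeometry.angle α β)
    (D : EuclideanSpace ℝ (Fin 2) × EuclideanSpace ℝ (Fin 2) → ℝ)
    (hD : D = fun p => ‖p.1 - α‖ ^ 2 + ‖p.2 - β‖ ^ 2)
    (Cnarr C3 : Set (EuclideanSpace ℝ (Fin 2) × EuclideanSpace ℝ (Fin 2)))
    (hCnarr : Cnarr = {p | p.1 ≠ 0 ∧ p.2 ≠ 0 ∧ InnerProductGeometry.angle p.1 p.2 ≤ θ})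
    (hC3 : C3 = {p | p.1 ≠ 0 ∧ p.2 ≠ 0 ∧ InnerProductGeometry.angle p.1 p.2 = θ}) :
    (∀ p ∈ Cnarr, (∀ q ∈ Cnarr, D p ≤ D q) → InnerProductGeometry.angle p.1 p.2 = θ) ∧
      {p ∈ C3 | ∀ q ∈ C3, D p ≤ D q} = {p ∈ Cnarr | ∀ q ∈ Cnarr, D p ≤ D q} := by
  obtain rfl : D = pairSqDist α β := hD
  obtain rfl : Cnarr = angleLESet θ := hCnarr
  obtain rfl : C3 = angleEqSet θ := hC3
  have hdim : 2 ≤ finrank ℝ (EuclideanSpace ℝ (Fin 2)) := by simp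
  refine ⟨fun p hp hmin => angle_eq_of_forall_pairSqDist_le hφ hp hmin,
    Set.ext fun p => ⟨fun ⟨⟨hp₁, hp₂, hpθ⟩, hmin⟩ => ?_, fun ⟨hp, hmin⟩ => ?_⟩⟩
  · exact ⟨⟨hp₁, hp₂, hpθ.le⟩, forall_angleLESet_pairSqDist_le hdim hα hβ hφ.le hmin⟩
  · exact ⟨⟨hp.1, hp.2.1, angle_eq_of_forall_pairSqDist_le hφ hp hmin⟩,
      fun q ⟨hq₁, hq₂, hqθ⟩ => hmin q ⟨hq₁, hq₂, hqθ.le⟩⟩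

theorem stmt16 (α β : EuclideanSpace ℝ (Fin 2)) (hα : α ≠ 0) (hβ : β ≠ 0)
    (θ : ℝ) (hθ : θ ∈ Set.Ioo 0 π) (hφ : θ < InnerProductGeometry.angle α β)
    (D : EuclideanSpace ℝ (Fin 2) × EuclideanSpace ℝ (Fin 2) → ℝ)
    (hD : D = fun p => ‖p.1 - α‖ ^ 2 + ‖p.2 - β‖ ^ 2)
    (Cnarr C3 : Set (EuclideanSpace ℝ (Fin 2) × EuclideanSpace ℝ (Fin 2)))
    (hCnarr : Cnarr = {p | p.1 ≠ 0 ∧ p.2 ≠ 0 ∧ InnerProductGeometry.angle p.1 p.2 ≤ θ})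
    (hC3 : C3 = {p | p.1 ≠ 0 ∧ p.2 ≠ 0 ∧ InnerProductGeometry.angle p.1 p.2 = θ}) :
    (∀ p ∈ Cnarr, (∀ q ∈ Cnarr, D p ≤ D q) → InnerProductGeometry.angle p.1 p.2 = θ) ∧
      {p ∈ C3 | ∀ q ∈ C3, D p ≤ D q} = {p ∈ Cnarr | ∀ q ∈ Cnarr, D p ≤ D q} :=
  stmt16_general α β hα hβ θ hφ D hD Cnarr C3 hCnarr hC3
end
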